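/- Suppose for all (x,y) ∈ Z, C_j x ≥ 0 for every j ∈ [n]. Then max_{δ ∈ U_S} δᵀ C x = δ̄ᵀ C x, where δ̄_j = min_k (δ̂_k + γ_{kk} + dist(k,j)); hence the robust constraint over U_S is equivalent to the single constraint δ̄ᵀ C x + dᵀ y ≤ c. -/
import Mathlib

def chainCost {n : ℕ} (γ : Fin n → Fin n → ℝ) : List (Fin n) → ℝ
  | [] => 0
  | [_] => 0
  | a :: b :: l => γ a b + chainCost γ (b :: l)

def IsWalk {n : ℕ} (E : Fin n → Fin n → Prop) : List (Fin n) → Prop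
  | [] => True
  | [_] => True
  | a :: b :: l => E a b ∧ IsWalk E (b :: l)

lemma walk_bound {n : ℕ} {E : Fin n → Fin n → Prop} {γ : Fin n → Fin n → ℝ}
    {δ : Fin n → ℝ} (hδ : ∀ i j, E i j → |δ i - δ j| ≤ γ i j) :
    ∀ l : List (Fin n), IsWalk E l → ∀ i j, l.head? = some i → l.getLast? = some j →
      δ j - δ i ≤ chainCost γ l
  | [], _, i, j, hh, _ => by simp at hh
  | [a], _, i, j, hh, hl => by
      simp at hh hl; subst hh; subst hl; simp [chainCost]
  | a :: b :: l, hw, i, j, hh, hl => by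
      simp at hh; subst hh
      rw [List.getLast?_cons_cons] at hl
      have h1 := walk_bound hδ (b :: l) hw.2 b j rfl hl
      have h2 := abs_le.1 (hδ a b hw.1)
      show δ j - δ a ≤ γ a b + chainCost γ (b :: l)
      linarith [h2.2]

lemma walk_append {n : ℕ} {E : Fin n → Fin n → Prop} {γ : Fin n → Fin n → ℝ} :
    ∀ l : List (Fin n), ∀ i j, IsWalk E l → l.getLast? = some i → E i j →
      IsWalk E (l ++ [j]) ∧ chainCost γ (l ++ [j]) = chainCost γ l + γ i j
  | [], i, j, _, hl, _ => by simp at hl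
  | [a], i, j, _, hl, he => by
      simp at hl; subst hl
      exact ⟨⟨he, trivial⟩, by simp [chainCost]⟩
  | a :: b :: l, i, j, hw, hl, he => by
      rw [List.getLast?_cons_cons] at hl
      obtain ⟨hw', hc'⟩ := walk_append (γ := γ) (b :: l) i j hw.2 hl he
      exact ⟨⟨hw.1, hw'⟩, by show γ a b + chainCost γ ((b::l)++[j]) = γ a b + chainCost γ (b::l) + γ i j; rw [hc']; ring⟩
/-- `dist` is the shortest-path distance of the weighted graph `(E, γ)`:
for each pair `(i, j)`, `dist i j` is the minimum of the costs of walks from `i` to `j`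
(in particular such a walk exists, i.e. the graph is connected). -/
def IsSPDist {n : ℕ} (E : Fin n → Fin n → Prop) (γ : Fin n → Fin n → ℝ)
    (dist : Fin n → Fin n → ℝ) : Prop :=
  ∀ i j : Fin n, IsLeast {c : ℝ | ∃ l : List (Fin n), IsWalk E l ∧
    l.head? = some i ∧ l.getLast? = some j ∧ c = chainCost γ l} (dist i j)

/-- The smooth uncertainty set `U_S(δ̂, G)`. -/
def smoothSet {n : ℕ} (δhat : Fin n → ℝ) (E : Fin n → Fin n → Prop)
    (γ : Fin n → Fin n → ℝ) : Set (Fin n → ℝ) :=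
  {δ | (∀ i, |δ i - δhat i| ≤ γ i i) ∧ ∀ i j, E i j → |δ i - δ j| ≤ γ i j}

open Matrix

/-- if `C_j x ≥ 0` for every `j` and every `(x,y) ∈ Z`, then
`max_{δ ∈ U_S} δᵀ C x = hiᵀ C x` where `hi j = min_k (δ̂_k + γ_kk + dist(k,j))`;
hence the robust constraint over `U_S` is equivalent to `hiᵀ C x + dᵀ y ≤ c`. -/
theorem stmt9 {n nx ny : ℕ} (E : Fin n → Fin n → Prop) (γ : Fin n → Fin n → ℝ)
    (hEsymm : ∀ i j, E i j → E j i) (hγsymm : ∀ i j, γ i j = γ j i)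
    (hγnonneg : ∀ i j, 0 ≤ γ i j)
    (dist : Fin n → Fin n → ℝ) (hSP : IsSPDist E γ dist) (δhat : Fin n → ℝ)
    (hi : Fin n → ℝ)
    (hhi : ∀ j, IsLeast {t : ℝ | ∃ k, t = δhat k + γ k k + dist k j} (hi j))
    (hne : (smoothSet δhat E γ).Nonempty)
    (C : Matrix (Fin n) (Fin nx) ℝ) (d : Fin ny → ℝ) (c : ℝ)
    (Z : Set ((Fin nx → ℝ) × (Fin ny → ℝ)))
    (hpos : ∀ p ∈ Z, ∀ j, 0 ≤ (C j) ⬝ᵥ p.1) :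
    ∀ p ∈ Z,
      IsGreatest {t : ℝ | ∃ δ ∈ smoothSet δhat E γ, t = δ ⬝ᵥ (C *ᵥ p.1)}
        (hi ⬝ᵥ (C *ᵥ p.1)) ∧
      ((∀ δ ∈ smoothSet δhat E γ, δ ⬝ᵥ (C *ᵥ p.1) + d ⬝ᵥ p.2 ≤ c) ↔
        hi ⬝ᵥ (C *ᵥ p.1) + d ⬝ᵥ p.2 ≤ c) := by
  obtain ⟨δ0, hδ0⟩ := hne
  have key : ∀ δ ∈ smoothSet δhat E γ, ∀ j k, δ j ≤ δhat k + γ k k + dist k j := by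
    intro δ hδ j k
    obtain ⟨l, hw, hh, hl, hc⟩ := (hSP k j).1
    have h1 := walk_bound hδ.2 l hw k j hh hl
    have h2 := abs_le.1 (hδ.1 k)
    rw [← hc] at h1
    linarith [h2.2]
  have hub : ∀ δ ∈ smoothSet δhat E γ, ∀ j, δ j ≤ hi j := by
    intro δ hδ j
    obtain ⟨k, hk⟩ := (hhi j).1
    rw [hk]; exact key δ hδ j k
  have hdii : ∀ i, dist i i ≤ 0 :=
    fun i => (hSP i i).2 ⟨[i], trivial, rfl, rfl, rfl⟩
  have hmem : hi ∈ smoothSet δhat E γ := by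
    constructor
    · intro i
      rw [abs_le]
      refine ⟨?_, ?_⟩
      · have h1 := abs_le.1 (hδ0.1 i)
        have h2 := hub δ0 hδ0 i
        linarith [h1.1]
      · have h1 := (hhi i).2 ⟨i, rfl⟩
        linarith [hdii i]
    · have step : ∀ i j, E i j → hi j ≤ hi i + γ i j := by
        intro i j hij
        obtain ⟨k, hk⟩ := (hhi i).1
        obtain ⟨l, hw, hh, hl, hc⟩ := (hSP k i).1
        obtain ⟨hw', hc'⟩ := walk_append (γ := γ) l i j hw hl hij
        have hhead : (l ++ [j]).head? = some k := by
          cases l with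
          | nil => simp at hh
          | cons a t => simpa using hh
        have hd : dist k j ≤ chainCost γ l + γ i j := by
          have := (hSP k j).2 ⟨l ++ [j], hw', hhead, by simp, rfl⟩
          linarith [hc']
        have h2 := (hhi j).2 ⟨k, rfl⟩
        rw [← hc] at hd
        linarith
      intro i j hij
      have h1 := step i j hij
      have h2 := step j i (hEsymm i j hij)
      rw [hγsymm j i] at h2
      rw [abs_le]; constructor <;> linarith
  intro p hp
  have hdot : ∀ δ ∈ smoothSet δhat E γ, δ ⬝ᵥ (C *ᵥ p.1) ≤ hi ⬝ᵥ (C *ᵥ p.1) := by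
    intro δ hδ
    simp only [dotProduct]
    apply Finset.sum_le_sum
    intro j _
    exact mul_le_mul_of_nonneg_right (hub δ hδ j) (hpos p hp j)
  refine ⟨⟨⟨hi, hmem, rfl⟩, ?_⟩, ?_⟩
  · rintro t ⟨δ, hδ, rfl⟩
    exact hdot δ hδ
  · constructor
    · intro h
      exact h hi hmem
    · intro h δ hδ
      linarith [hdot δ hδ]
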